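/- arXiv:0903.4373 — 3 statements merged into one kernel-verified Lean document; each statement's English description precedes it below -/
import Mathlib

section
/- For fixed λ > 0, the function g_λ(x) = 1 − Γ(x+1,λ)/Γ(x+1) is strictly decreasing on (0,∞). -/
open Real MeasureTheory Set

/-- Upper incomplete gamma function `Γ(a, x) = ∫_x^∞ t^(a-1) e^(-t) dt`. -/
noncomputable def upperGamma (a x : ℝ) : ℝ := ∫ t in Set.Ioi x, t ^ (a - 1) * Real.exp (-t)

/-- `g_λ(x) = 1 − Γ(x+1, λ)/Γ(x+1)`. -/
noncomputable def gFun (lam x : ℝ) : ℝ := 1 - upperGamma (x + 1) lam / Real.Gamma (x + 1)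

/-!
Write `Γ(a) = γ(a, λ) + Γ(a, λ)` with `γ(a, λ) = ∫₀^λ t^(a-1) e^(-t) dt`. Raising `a` by `d > 0`
multiplies the integrand by `t^d`, which is `< λ^d` on `(0, λ)` and `> λ^d` on `(λ, ∞)`. Hence
`γ(a+d, λ) < λ^d γ(a, λ)` and `Γ(a+d, λ) > λ^d Γ(a, λ)`, so `γ(a, λ)/Γ(a, λ)` strictly decreases
in `a`, i.e. `Γ(a, λ)/Γ(a)` strictly increases and `g_λ` strictly decreases.
-/

lemma setIntegral_lt_setIntegral {X : Type*} [MeasurableSpace X] {μ : Measure X} {s : Set X}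
    {f g : X → ℝ} (hs : MeasurableSet s) (hμs : μ s ≠ 0) (hf : IntegrableOn f s μ)
    (hg : IntegrableOn g s μ) (hlt : ∀ x ∈ s, f x < g x) :
    ∫ x in s, f x ∂μ < ∫ x in s, g x ∂μ := by
  rw [← sub_pos, ← integral_sub hg hf,
    setIntegral_pos_iff_support_of_nonneg_ae (f := fun x ↦ g x - f x) _ (hg.sub hf)]
  · rw [inter_eq_right.mpr fun x hx ↦ Function.mem_support.2 (sub_pos.2 (hlt x hx)).ne']
    exact pos_iff_ne_zero.2 hμs
  · filter_upwards [ae_restrict_mem hs] with x hx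
    exact sub_nonneg.2 (hlt x hx).le

/-- `γ(a, x)`; integrating over `(0, x)` rather than `(0, x]` changes nothing. -/
noncomputable def lowerGamma (a x : ℝ) : ℝ := ∫ t in Ioo 0 x, t ^ (a - 1) * exp (-t)

lemma integrableOn_rpow_mul_exp_neg {a : ℝ} (ha : 0 < a) {s : Set ℝ} (hs : s ⊆ Ioi 0) :
    IntegrableOn (fun t ↦ t ^ (a - 1) * exp (-t)) s := by
  simpa only [mul_comm] using (GammaIntegral_convergent ha).mono_set hs

lemma setIntegral_rpow_mul_exp_neg_pos {a : ℝ} (ha : 0 < a) {s : Set ℝ} (hs : MeasurableSet s)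
    (hs0 : s ⊆ Ioi 0) (hvol : volume s ≠ 0) : 0 < ∫ t in s, t ^ (a - 1) * exp (-t) := by
  simpa using setIntegral_lt_setIntegral hs hvol integrableOn_zero
    (integrableOn_rpow_mul_exp_neg ha hs0)
    fun t ht ↦ mul_pos (rpow_pos_of_pos (hs0 ht) _) (exp_pos _)

lemma upperGamma_pos {a x : ℝ} (ha : 0 < a) (hx : 0 ≤ x) : 0 < upperGamma a x :=
  setIntegral_rpow_mul_exp_neg_pos ha measurableSet_Ioi (Ioi_subset_Ioi hx) (by simp)

lemma lowerGamma_pos {a x : ℝ} (ha : 0 < a) (hx : 0 < x) : 0 < lowerGamma a x :=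
  setIntegral_rpow_mul_exp_neg_pos ha measurableSet_Ioo Ioo_subset_Ioi_self (by simp [hx])

lemma Gamma_eq_lowerGamma_add_upperGamma {a x : ℝ} (ha : 0 < a) (hx : 0 ≤ x) :
    Gamma a = lowerGamma a x + upperGamma a x := by
  have hint {s : Set ℝ} (hs : s ⊆ Ioi 0) := integrableOn_rpow_mul_exp_neg ha hs
  rw [Gamma_eq_integral ha, lowerGamma, upperGamma, ← integral_Ioc_eq_integral_Ioo,
    ← setIntegral_union (Ioc_disjoint_Ioi le_rfl) measurableSet_Ioi
      (hint Ioc_subset_Ioi_self) (hint (Ioi_subset_Ioi hx)),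
    Ioc_union_Ioi_eq_Ioi hx]
  simp only [mul_comm]

lemma rpow_add_sub_one_mul_exp_neg {t : ℝ} (ht : 0 < t) (a d : ℝ) :
    t ^ (a + d - 1) * exp (-t) = t ^ d * (t ^ (a - 1) * exp (-t)) := by
  rw [← mul_assoc, ← rpow_add ht]
  ring_nf

lemma lowerGamma_add_lt {a d x : ℝ} (ha : 0 < a) (hd : 0 < d) (hx : 0 < x) :
    lowerGamma (a + d) x < x ^ d * lowerGamma a x := by
  rw [lowerGamma, lowerGamma, ← integral_const_mul]
  refine setIntegral_lt_setIntegral measurableSet_Ioo (by simp [hx])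
    (integrableOn_rpow_mul_exp_neg (by linarith) Ioo_subset_Ioi_self)
    ((integrableOn_rpow_mul_exp_neg ha Ioo_subset_Ioi_self).const_mul _) fun t ht ↦ ?_
  rw [rpow_add_sub_one_mul_exp_neg ht.1]
  exact mul_lt_mul_of_pos_right (rpow_lt_rpow ht.1.le ht.2 hd)
    (mul_pos (rpow_pos_of_pos ht.1 _) (exp_pos _))

lemma rpow_mul_upperGamma_lt {a d x : ℝ} (ha : 0 < a) (hd : 0 < d) (hx : 0 < x) :
    x ^ d * upperGamma a x < upperGamma (a + d) x := by
  have hsub : Ioi x ⊆ Ioi 0 := Ioi_subset_Ioi hx.le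
  rw [upperGamma, upperGamma, ← integral_const_mul]
  refine setIntegral_lt_setIntegral measurableSet_Ioi (by simp)
    ((integrableOn_rpow_mul_exp_neg ha hsub).const_mul _)
    (integrableOn_rpow_mul_exp_neg (by linarith) hsub) fun t ht ↦ ?_
  rw [rpow_add_sub_one_mul_exp_neg (hsub ht)]
  exact mul_lt_mul_of_pos_right (rpow_lt_rpow hx.le ht hd)
    (mul_pos (rpow_pos_of_pos (hsub ht) _) (exp_pos _))

lemma div_add_lt_div_add {F₁ F₂ G₁ G₂ k : ℝ} (hF₁ : 0 < F₁) (hG₁ : 0 < G₁) (hG₂ : 0 ≤ G₂)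
    (hk : 0 < k) (hF : k * F₁ < F₂) (hG : G₂ < k * G₁) :
    F₁ / (G₁ + F₁) < F₂ / (G₂ + F₂) := by
  have hF₂ : 0 < F₂ := (mul_pos hk hF₁).trans hF
  rw [div_lt_div_iff₀ (by positivity) (by positivity)]
  have hcross : F₁ * G₂ < F₂ * G₁ :=
    calc F₁ * G₂ < F₁ * (k * G₁) := mul_lt_mul_of_pos_left hG hF₁
      _ = k * F₁ * G₁ := by ring
      _ < F₂ * G₁ := mul_lt_mul_of_pos_right hF hG₁
  linarith

lemma upperGamma_div_Gamma_strictMonoOn {x : ℝ} (hx : 0 < x) :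
    StrictMonoOn (fun a ↦ upperGamma a x / Gamma a) (Ioi 0) := by
  intro a (ha : 0 < a) b (hb : 0 < b) hab
  obtain ⟨d, hd, rfl⟩ : ∃ d, 0 < d ∧ b = a + d := ⟨b - a, sub_pos.2 hab, by ring⟩
  simp only [Gamma_eq_lowerGamma_add_upperGamma ha hx.le,
    Gamma_eq_lowerGamma_add_upperGamma hb hx.le]
  exact div_add_lt_div_add (upperGamma_pos ha hx.le) (lowerGamma_pos ha hx)
    (lowerGamma_pos hb hx).le (rpow_pos_of_pos hx d) (rpow_mul_upperGamma_lt ha hd hx)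
    (lowerGamma_add_lt ha hd hx)

/-- For fixed `λ > 0`, `g_λ` is strictly decreasing on `(0, ∞)`. -/
theorem gFun_strictAntiOn (lam : ℝ) (hlam : 0 < lam) :
    StrictAntiOn (gFun lam) (Set.Ioi 0) := by
  intro x (hx : 0 < x) y (hy : 0 < y) hxy
  have := upperGamma_div_Gamma_strictMonoOn hlam (show (0 : ℝ) < x + 1 by linarith)
    (show (0 : ℝ) < y + 1 by linarith) (by linarith)
  simp only [gFun]
  linarith
end

section
/- (Focussing / Anderson's theorem) Let M_n be the maximum of n independent Poisson(λ) random variables, λ > 0 fixed. Then there exists a sequence of integers I_n such that Pr[M_n ∈ {I_n, I_n + 1}] → 1 as n → ∞. -/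
/-!
Write `q k = P(X > k)`, so that `P(M_n ≤ k) = (1 - q k) ^ n`: this is close to `1` when `n q k` is
small and close to `0` when `n q k` is large. The Poisson tail decays superexponentially,
`q (k + 1) / q k ≤ λ / (k + 2) → 0`. If `k` is the first index with `n² q k q (k + 1) ≤ 1`, then
`(n q (k + 1))² ≤ q (k + 1) / q k → 0` while `(n q (k - 1))² > q (k - 1) / q k → ∞`, so `M_n`
lies in `{k, k + 1}` with probability tending to `1`.
-/

open MeasureTheory ProbabilityTheory Real Filter

open scoped Topology NNReal

theorem tendsto_one_sub_pow_of_tendsto_mul_zero {a : ℕ → ℝ} (ha₀ : ∀ n, 0 ≤ a n)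
    (ha₁ : ∀ n, a n ≤ 1) (ha : Tendsto (fun n : ℕ => n * a n) atTop (𝓝 0)) :
    Tendsto (fun n => (1 - a n) ^ n) atTop (𝓝 1) := by
  refine tendsto_of_tendsto_of_tendsto_of_le_of_le
    (by simpa using (tendsto_const_nhds (x := (1 : ℝ))).sub ha) tendsto_const_nhds (fun n => ?_)
    (fun n => pow_le_one₀ (by linarith [ha₁ n]) (by linarith [ha₀ n]))
  simpa [sub_eq_add_neg] using one_add_mul_le_pow (a := -a n) (by linarith [ha₁ n]) n

theorem tendsto_one_sub_pow_of_tendsto_mul_atTop {b : ℕ → ℝ} (hb : ∀ n, b n ≤ 1)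
    (hnb : Tendsto (fun n : ℕ => n * b n) atTop atTop) :
    Tendsto (fun n => (1 - b n) ^ n) atTop (𝓝 0) := by
  refine squeeze_zero (fun n => pow_nonneg (by linarith [hb n]) n) (fun n => ?_)
    (tendsto_exp_atBot.comp (tendsto_neg_atTop_atBot.comp hnb))
  calc (1 - b n) ^ n ≤ exp (-b n) ^ n :=
        pow_le_pow_left₀ (by linarith [hb n]) (one_sub_le_exp_neg _) n
    _ = exp (-(n * b n)) := by rw [← exp_nat_mul]; ring_nf

theorem exists_crossing_index {s : ℕ → ℝ} (hpos : ∀ k, 0 < s k) (hs : Tendsto s atTop (𝓝 0)) :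
    ∃ J : ℕ → ℕ, Tendsto J atTop atTop ∧
      ∀ᶠ n : ℕ in atTop, (n : ℝ) ^ 2 * s (J n + 1) ≤ 1 ∧ 1 < (n : ℝ) ^ 2 * s (J n) := by
  classical
  have hex (n : ℕ) : ∃ k, (n : ℝ) ^ 2 * s k ≤ 1 :=
    ((hs.const_mul _).eventually_lt_const (by simp : (n : ℝ) ^ 2 * 0 < 1)).exists.imp
      fun _ => le_of_lt
  have hfind : Tendsto (fun n => Nat.find (hex n)) atTop atTop := by
    refine tendsto_atTop.2 fun K => ?_
    have hlarge (m : ℕ) : ∀ᶠ n : ℕ in atTop, 1 < (n : ℝ) ^ 2 * s m :=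
      (((tendsto_pow_atTop two_ne_zero).comp tendsto_natCast_atTop_atTop).atTop_mul_const
        (hpos m)).eventually_gt_atTop 1
    filter_upwards [(Finset.range K).eventually_all.2 fun m _ => hlarge m] with n hn
    exact (Nat.le_find_iff _ _).2 fun m hm => not_le.2 (hn m (Finset.mem_range.2 hm))
  refine ⟨fun n => Nat.find (hex n) - 1, (tendsto_sub_atTop_nat 1).comp hfind, ?_⟩
  filter_upwards [hfind.eventually_ge_atTop 1] with n hn
  rw [Nat.sub_add_cancel hn]
  exact ⟨Nat.find_spec (hex n), not_le.1 (Nat.find_min (hex n) (by omega))⟩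

theorem exists_tendsto_mul_zero_and_tendsto_mul_atTop {q : ℕ → ℝ} (hpos : ∀ k, 0 < q k)
    (hq : Tendsto q atTop (𝓝 0)) (hratio : Tendsto (fun k => q (k + 1) / q k) atTop (𝓝 0)) :
    ∃ I : ℕ → ℕ, Tendsto (fun n : ℕ => n * q (I n + 2)) atTop (𝓝 0) ∧
      Tendsto (fun n : ℕ => n * q (I n)) atTop atTop := by
  obtain ⟨I, hI, hcross⟩ := exists_crossing_index (s := fun k => q k * q (k + 1))
    (fun k => mul_pos (hpos k) (hpos (k + 1)))
    (by simpa using hq.mul (hq.comp (tendsto_add_atTop_nat 1)))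
  have hinv : Tendsto (fun k => q k / q (k + 1)) atTop atTop :=
    (tendsto_nhdsWithin_iff.2 ⟨hratio, Eventually.of_forall fun k =>
      div_pos (hpos (k + 1)) (hpos k)⟩).inv_tendsto_nhdsGT_zero.congr fun k => by simp
  refine ⟨I, ?_, ?_⟩
  · refine squeeze_zero' (Eventually.of_forall fun n => by have := hpos (I n + 2); positivity)
      ?_ (by simpa using (hratio.comp ((tendsto_add_atTop_nat 1).comp hI)).sqrt)
    filter_upwards [hcross] with n ⟨hle, _⟩
    have h1 := hpos (I n + 1)
    have h2 := hpos (I n + 2)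
    refine Real.le_sqrt_of_sq_le ?_
    rw [le_div_iff₀ h1]
    calc ((n : ℝ) * q (I n + 2)) ^ 2 * q (I n + 1)
        = (n : ℝ) ^ 2 * (q (I n + 1) * q (I n + 1 + 1)) * q (I n + 2) := by ring
      _ ≤ 1 * q (I n + 2) := by gcongr
      _ = q (I n + 1 + 1) := one_mul _
  · refine tendsto_atTop_mono' _ ?_ (tendsto_sqrt_atTop.comp (hinv.comp hI))
    filter_upwards [hcross] with n ⟨_, hlt⟩
    have h0 := hpos (I n)
    have h1 := hpos (I n + 1)
    refine Real.sqrt_le_left (by positivity) |>.2 ?_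
    rw [Function.comp_apply, div_le_iff₀ h1]
    calc q (I n) = 1 * q (I n) := (one_mul _).symm
      _ ≤ (n : ℝ) ^ 2 * (q (I n) * q (I n + 1)) * q (I n) := by gcongr
      _ = ((n : ℝ) * q (I n)) ^ 2 * q (I n + 1) := by ring

theorem Finset.measurable_sup {ι δ α : Type*} [MeasurableSpace δ] [SemilatticeSup α] [OrderBot α]
    [MeasurableSpace α] [MeasurableSup₂ α] {s : Finset ι} {f : ι → δ → α}
    (hf : ∀ i ∈ s, Measurable (f i)) : Measurable fun x => s.sup (f · x) := by
  simpa only [← Finset.sup_apply] using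
    Finset.sup_induction (p := Measurable) measurable_const (fun _ hf _ hg => hf.sup hg) hf

namespace MeasureTheory

theorem measureReal_eq_add_one_or_eq_add_two {Ω : Type*} [MeasurableSpace Ω] {μ : Measure Ω}
    [IsFiniteMeasure μ] {Y : Ω → ℕ} (hY : Measurable Y) (k : ℕ) :
    μ.real {ω | Y ω = k + 1 ∨ Y ω = k + 1 + 1} =
      μ.real {ω | Y ω ≤ k + 2} - μ.real {ω | Y ω ≤ k} := by
  have hsub : {ω | Y ω ≤ k} ⊆ {ω | Y ω ≤ k + 2} := fun ω (h : Y ω ≤ k) =>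
    show Y ω ≤ k + 2 by omega
  rw [← measureReal_sdiff hsub (hY measurableSet_Iic)]
  congr 1
  ext ω
  simp only [Set.mem_sdiff, Set.mem_ofPred_eq]
  omega

namespace Measure

variable (ν : Measure ℕ)

theorem real_Iic_eq_one_sub_real_Ici_add_one [IsProbabilityMeasure ν] (k : ℕ) :
    ν.real (Set.Iic k) = 1 - ν.real (Set.Ici (k + 1)) := by
  rw [← Set.Iio_add_one_eq_Iic, ← Set.compl_Ici, probReal_compl_eq_one_sub measurableSet_Ici]

variable [IsFiniteMeasure ν]

theorem hasSum_real_singleton_add (k : ℕ) :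
    HasSum (fun j => ν.real {j + k}) (ν.real (Set.Ici k)) := by
  have hIci : Set.Ici k = ⋃ j, {j + k} := by
    ext i
    simp only [Set.mem_Ici, Set.mem_iUnion, Set.mem_singleton_iff]
    exact ⟨fun h => ⟨i - k, by omega⟩, by rintro ⟨j, rfl⟩; omega⟩
  have hmeas : ν (Set.Ici k) = ∑' j, ν {j + k} := by
    rw [hIci, measure_iUnion (fun i j hij => by simpa [Function.onFun] using hij)
      fun _ => measurableSet_singleton _]
  rw [measureReal_def, hmeas, ENNReal.tsum_toReal_eq fun _ => measure_ne_top _ _]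
  exact ENNReal.hasSum_toReal (hmeas ▸ measure_ne_top _ _)

theorem tendsto_real_Ici_atTop : Tendsto (fun k => ν.real (Set.Ici k)) atTop (𝓝 0) := by
  simpa only [fun k => (hasSum_real_singleton_add ν k).tsum_eq] using
    tendsto_sum_nat_add fun j => ν.real {j}

end Measure

end MeasureTheory

namespace ProbabilityTheory

theorem poissonMeasure_real_singleton_succ (r : ℝ≥0) (n : ℕ) :
    (poissonMeasure r).real {n + 1} = r / (n + 1) * (poissonMeasure r).real {n} := by
  simp only [poissonMeasure_real_singleton, Nat.factorial_succ, Nat.cast_mul, Nat.cast_succ,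
    pow_succ]
  field_simp

theorem poissonMeasure_real_Ici_pos {r : ℝ≥0} (hr : 0 < r) (k : ℕ) :
    0 < (poissonMeasure r).real (Set.Ici k) :=
  (poissonMeasure_real_singleton_pos k hr).trans_le
    (measureReal_mono (Set.singleton_subset_iff.2 Set.self_mem_Ici))

theorem poissonMeasure_real_Ici_succ_le (r : ℝ≥0) (k : ℕ) :
    (poissonMeasure r).real (Set.Ici (k + 1)) ≤
      r / (k + 1) * (poissonMeasure r).real (Set.Ici k) := by
  refine hasSum_le (fun j => ?_) (Measure.hasSum_real_singleton_add _ (k + 1))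
    ((Measure.hasSum_real_singleton_add _ k).mul_left _)
  rw [← add_assoc, poissonMeasure_real_singleton_succ]
  gcongr
  exact Nat.le_add_left k j

theorem tendsto_poissonMeasure_real_Ici_succ_div {r : ℝ≥0} (hr : 0 < r) :
    Tendsto (fun k : ℕ =>
      (poissonMeasure r).real (Set.Ici (k + 1)) / (poissonMeasure r).real (Set.Ici k))
      atTop (𝓝 0) := by
  refine squeeze_zero (fun k => div_nonneg measureReal_nonneg measureReal_nonneg) (fun k => ?_)
    ((tendsto_const_div_atTop_nhds_zero_nat (r : ℝ)).comp (tendsto_add_atTop_nat 1))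
  rw [div_le_iff₀ (poissonMeasure_real_Ici_pos hr k)]
  simpa using poissonMeasure_real_Ici_succ_le r k

variable {Ω : Type*} [MeasurableSpace Ω] {μ : Measure Ω}

theorem hasLaw_of_measureReal_eq_singleton [IsFiniteMeasure μ] {X : Ω → ℕ} (hX : Measurable X)
    {ν : Measure ℕ} [IsFiniteMeasure ν] (h : ∀ j, μ.real {ω | X ω = j} = ν.real {j}) :
    HasLaw X ν μ where
  aemeasurable := hX.aemeasurable
  map_eq := Measure.ext_of_singleton fun j => by
    rw [Measure.map_apply hX (measurableSet_singleton j), ← ENNReal.toReal_eq_toReal_iff'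
      (measure_ne_top _ _) (measure_ne_top _ _)]
    exact h j

theorem iIndepFun.measure_finset_sup_le {ι : Type*} {X : ι → Ω → ℕ} (hind : iIndepFun X μ)
    (s : Finset ι) (k : ℕ) : μ {ω | s.sup (X · ω) ≤ k} = ∏ i ∈ s, μ {ω | X i ω ≤ k} := by
  have hset : {ω | s.sup (X · ω) ≤ k} = ⋂ i ∈ s, X i ⁻¹' Set.Iic k := by
    ext ω
    simp [Finset.sup_le_iff]
  rw [hset, hind.measure_inter_preimage_eq_mul s fun _ _ => measurableSet_Iic]
  rfl

theorem iIndepFun.measureReal_range_sup_le [IsFiniteMeasure μ] {X : ℕ → Ω → ℕ} {ν : Measure ℕ}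
    (hind : iIndepFun X μ) (hlaw : ∀ i, HasLaw (X i) ν μ) (n k : ℕ) :
    μ.real {ω | (Finset.range n).sup (X · ω) ≤ k} = ν.real (Set.Iic k) ^ n := by
  rw [measureReal_def, hind.measure_finset_sup_le, ENNReal.toReal_prod]
  calc ∏ i ∈ Finset.range n, μ.real {ω | X i ω ≤ k}
      = ∏ _i ∈ Finset.range n, ν.real (Set.Iic k) :=
        Finset.prod_congr rfl fun i _ => (hlaw i).measureReal_eq measurableSet_Iic
    _ = ν.real (Set.Iic k) ^ n := by rw [Finset.prod_const, Finset.card_range]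

end ProbabilityTheory

/-- (Anderson) The maximum `M_n` of `n` i.i.d. Poisson(λ) random variables concentrates on
two consecutive integers: there exist integers `I_n` with `Pr[M_n ∈ {I_n, I_n+1}] → 1`. -/
theorem poisson_max_focussing
    {Ω : Type*} [MeasurableSpace Ω] (μ : Measure Ω) [IsProbabilityMeasure μ]
    (X : ℕ → Ω → ℕ) (lam : ℝ) (hlam : 0 < lam)
    (hIndep : iIndepFun X μ)
    (hX : ∀ i, ∀ j : ℕ,
      (μ {ω | X i ω = j}).toReal = Real.exp (-lam) * lam ^ j / (Nat.factorial j))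
    (hMeas : ∀ i, Measurable (X i))
    (M : ℕ → Ω → ℕ)
    (hM : ∀ n ω, M n ω = (Finset.range n).sup (fun i => X i ω)) :
    ∃ I : ℕ → ℕ,
      Tendsto (fun n => (μ {ω | M n ω = I n ∨ M n ω = I n + 1}).toReal)
        atTop (nhds 1) := by
  obtain rfl : M = fun n ω => (Finset.range n).sup (X · ω) := funext₂ hM
  have hr : 0 < lam.toNNReal := Real.toNNReal_pos.2 hlam
  have hlaw (i : ℕ) : HasLaw (X i) (poissonMeasure lam.toNNReal) μ :=
    hasLaw_of_measureReal_eq_singleton (hMeas i) fun j => by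
      rw [poissonMeasure_real_singleton, Real.coe_toNNReal _ hlam.le, ← hX i j, measureReal_def]
  set q : ℕ → ℝ := fun k => (poissonMeasure lam.toNNReal).real (Set.Ici (k + 1))
  have hcdf (n k : ℕ) : μ.real {ω | (Finset.range n).sup (X · ω) ≤ k} = (1 - q k) ^ n := by
    rw [hIndep.measureReal_range_sup_le hlaw, Measure.real_Iic_eq_one_sub_real_Ici_add_one]
  obtain ⟨J, hJ₀, hJ⟩ := exists_tendsto_mul_zero_and_tendsto_mul_atTop (q := q)
    (fun k => poissonMeasure_real_Ici_pos hr _)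
    ((Measure.tendsto_real_Ici_atTop _).comp (tendsto_add_atTop_nat 1))
    ((tendsto_poissonMeasure_real_Ici_succ_div hr).comp (tendsto_add_atTop_nat 1))
  refine ⟨fun n => J n + 1, ?_⟩
  simp_rw [← measureReal_def, measureReal_eq_add_one_or_eq_add_two
    (Finset.measurable_sup fun i _ => hMeas i), hcdf]
  simpa using (tendsto_one_sub_pow_of_tendsto_mul_zero (fun _ => measureReal_nonneg)
    (fun _ => measureReal_le_one) hJ₀).sub
    (tendsto_one_sub_pow_of_tendsto_mul_atTop (fun _ => measureReal_le_one) hJ)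
end

section
/- Let M_n be the maximum of n i.i.d. Poisson(λ) random variables, λ > 0 fixed. Then M_n / (log n / log log n) → 1 in probability as n → ∞. -/
/-!
Write `a n = log n / log log n` and `p k = e^{-λ} λ^k / k!`. Since `log k! = k log k + O(k)` and
`log k = log log n + O(log log log n)` when `k ~ c a n`, one gets
`log (n p (k n)) = (1 - c + o(1)) log n`. For `c > 1` the union bound, together with the tail
estimate `P(X ≥ k) ≤ e^λ p k` (from `p (k + j) ≤ e^λ p k p j`), gives
`P(M n > c a n) ≤ e^λ n p (k n) → 0`. For `c < 1` independence gives
`P(M n < c a n) ≤ (1 - p (k n))^n ≤ exp (-n p (k n)) → 0`.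
-/

open MeasureTheory ProbabilityTheory Real Filter Topology
open scoped NNReal Nat

theorem Real.mul_log_sub_le_log_factorial (n : ℕ) : n * log n - n ≤ log n ! := by
  rcases n.eq_zero_or_pos with rfl | hn
  · simp
  have hn' : (0 : ℝ) < n := by exact_mod_cast hn
  have h := log_le_log (by positivity) (pow_div_factorial_le_exp (n : ℝ) hn'.le n)
  rwa [log_div (by positivity) (by positivity), log_pow, log_exp, sub_le_iff_le_add,
    ← sub_le_iff_le_add'] at h

theorem Real.log_factorial_le_mul_log (n : ℕ) : log n ! ≤ n * log n := by
  rw [← log_pow]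
  exact log_le_log (by positivity) (by exact_mod_cast n.factorial_le_pow)

theorem tendsto_natFloor_mul_add_one_div {α : Type*} {l : Filter α} {f : α → ℝ} {c : ℝ}
    (hc : 0 ≤ c) (hf : Tendsto f l atTop) :
    Tendsto (fun x => ((⌊c * f x⌋₊ + 1 : ℕ) : ℝ) / f x) l (𝓝 c) := by
  have hupper : Tendsto (fun x => c + 1 / f x) l (𝓝 c) := by
    simpa using tendsto_const_nhds.add ((tendsto_const_nhds (x := (1:ℝ))).div_atTop hf)
  refine tendsto_of_tendsto_of_tendsto_of_le_of_le' tendsto_const_nhds hupper ?_ ?_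
  all_goals
    filter_upwards [hf.eventually_gt_atTop 0] with x hx
    have hfloor := Nat.floor_le (mul_nonneg hc hx.le)
    have hlt := Nat.lt_floor_add_one (c * f x)
    push_cast
  · rw [le_div_iff₀ hx]; linarith
  · rw [div_le_iff₀ hx, add_mul, one_div_mul_cancel hx.ne']; linarith

theorem tendsto_log_natCast_atTop : Tendsto (fun n : ℕ => log n) atTop atTop :=
  tendsto_log_atTop.comp tendsto_natCast_atTop_atTop

theorem tendsto_log_log_natCast_atTop : Tendsto (fun n : ℕ => log (log n)) atTop atTop :=
  tendsto_log_atTop.comp tendsto_log_natCast_atTop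

noncomputable def logDivLogLog (n : ℕ) : ℝ := log n / log (log n)

theorem tendsto_logDivLogLog_atTop : Tendsto logDivLogLog atTop atTop := by
  have h : Tendsto (fun x => log x / x) atTop (𝓝[>] 0) := by
    refine tendsto_nhdsWithin_iff.mpr ⟨isLittleO_log_id_atTop.tendsto_div_nhds_zero, ?_⟩
    filter_upwards [eventually_gt_atTop 1] with x hx using div_pos (log_pos hx) (by linarith)
  refine (h.inv_tendsto_nhdsGT_zero.comp tendsto_log_natCast_atTop).congr fun n => ?_
  simp [logDivLogLog]

section Asymptotics

variable {k : ℕ → ℕ} {c : ℝ}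

theorem tendsto_div_log_of_tendsto_div_logDivLogLog
    (hk : Tendsto (fun n => (k n : ℝ) / logDivLogLog n) atTop (𝓝 c)) :
    Tendsto (fun n => (k n : ℝ) / log n) atTop (𝓝 0) := by
  refine (hk.div_atTop tendsto_log_log_natCast_atTop).congr' ?_
  filter_upwards [tendsto_log_natCast_atTop.eventually_gt_atTop 0,
    tendsto_log_log_natCast_atTop.eventually_gt_atTop 0] with n hl hL
  simp only [logDivLogLog]
  field_simp

theorem tendsto_log_div_log_log_of_tendsto_div_logDivLogLog (hc : 0 < c)
    (hk : Tendsto (fun n => (k n : ℝ) / logDivLogLog n) atTop (𝓝 c)) :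
    Tendsto (fun n => log (k n) / log (log n)) atTop (𝓝 1) := by
  have hL := tendsto_log_log_natCast_atTop
  have hlim : Tendsto (fun n => log ((k n : ℝ) / logDivLogLog n) / log (log n) + 1
      - log (log (log n)) / log (log n)) atTop (𝓝 (0 + 1 - 0)) :=
    (((hk.log hc.ne').div_atTop hL).add_const 1).sub
      ((isLittleO_log_id_atTop.tendsto_div_nhds_zero).comp hL)
  rw [zero_add, sub_zero] at hlim
  refine hlim.congr' ?_
  filter_upwards [tendsto_log_natCast_atTop.eventually_gt_atTop 0, hL.eventually_gt_atTop 0,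
    hk.eventually (lt_mem_nhds hc)] with n hl hL hka
  have hk0 : (0 : ℝ) < k n := (div_pos_iff_of_pos_right (div_pos hl hL)).mp hka
  rw [logDivLogLog, log_div hk0.ne' (by positivity), log_div hl.ne' hL.ne']
  field_simp
  ring

theorem tendsto_log_factorial_div_log (hc : 0 < c)
    (hk : Tendsto (fun n => (k n : ℝ) / logDivLogLog n) atTop (𝓝 c)) :
    Tendsto (fun n => log (k n)! / log n) atTop (𝓝 c) := by
  have hmain : Tendsto (fun n => (k n : ℝ) * log (k n) / log n) atTop (𝓝 c) := by
    have hlog := tendsto_log_div_log_log_of_tendsto_div_logDivLogLog hc hk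
    refine (mul_one c ▸ hk.mul hlog).congr' ?_
    filter_upwards [tendsto_log_natCast_atTop.eventually_gt_atTop 0,
      tendsto_log_log_natCast_atTop.eventually_gt_atTop 0] with n hl hL
    simp only [logDivLogLog]
    field_simp
  have hlower :
      Tendsto (fun n => (k n : ℝ) * log (k n) / log n - k n / log n) atTop (𝓝 c) := by
    simpa using hmain.sub (tendsto_div_log_of_tendsto_div_logDivLogLog hk)
  refine tendsto_of_tendsto_of_tendsto_of_le_of_le' hlower hmain ?_ ?_
  all_goals filter_upwards [tendsto_log_natCast_atTop.eventually_gt_atTop 0] with n hl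
  · rw [← sub_div]
    exact div_le_div_of_nonneg_right (mul_log_sub_le_log_factorial _) hl.le
  · exact div_le_div_of_nonneg_right (log_factorial_le_mul_log _) hl.le

theorem tendsto_log_mul_poisson_div_log {r : ℝ≥0} (hr : 0 < r) (hc : 0 < c)
    (hk : Tendsto (fun n => (k n : ℝ) / logDivLogLog n) atTop (𝓝 c)) :
    Tendsto (fun n : ℕ => log (n * (poissonMeasure r).real {k n}) / log n) atTop
      (𝓝 (1 - c)) := by
  have hlim : Tendsto
      (fun n : ℕ => 1 - r / log n + (k n : ℝ) / log n * log r - log (k n)! / log n)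
      atTop (𝓝 (1 - 0 + 0 * log r - c)) :=
    ((tendsto_const_nhds.sub (tendsto_const_nhds.div_atTop tendsto_log_natCast_atTop)).add
      ((tendsto_div_log_of_tendsto_div_logDivLogLog hk).mul_const _)).sub
      (tendsto_log_factorial_div_log hc hk)
  rw [sub_zero, zero_mul, add_zero] at hlim
  refine hlim.congr' ?_
  filter_upwards [tendsto_log_natCast_atTop.eventually_gt_atTop 0, eventually_gt_atTop 0]
    with n hl hn
  rw [poissonMeasure_real_singleton, log_mul (by positivity) (by positivity),
    log_div (by positivity) (by positivity), log_mul (by positivity) (by positivity), log_exp,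
    log_pow]
  field_simp
  ring

theorem tendsto_mul_poisson_nhds_zero {r : ℝ≥0} (hr : 0 < r) (hc : 1 < c)
    (hk : Tendsto (fun n => (k n : ℝ) / logDivLogLog n) atTop (𝓝 c)) :
    Tendsto (fun n : ℕ => n * (poissonMeasure r).real {k n}) atTop (𝓝 0) := by
  have hlog := ((tendsto_log_mul_poisson_div_log hr (by linarith) hk).neg_mul_atTop
    (by linarith) tendsto_log_natCast_atTop)
  refine (tendsto_exp_atBot.comp hlog).congr' ?_
  filter_upwards [tendsto_log_natCast_atTop.eventually_gt_atTop 0, eventually_gt_atTop 0]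
    with n hl hn
  have := poissonMeasure_real_singleton_pos (k n) hr
  rw [Function.comp_apply, div_mul_cancel₀ _ hl.ne', exp_log (by positivity)]

theorem tendsto_mul_poisson_atTop {r : ℝ≥0} (hr : 0 < r) (hc₀ : 0 < c) (hc : c < 1)
    (hk : Tendsto (fun n => (k n : ℝ) / logDivLogLog n) atTop (𝓝 c)) :
    Tendsto (fun n : ℕ => n * (poissonMeasure r).real {k n}) atTop atTop := by
  have hlog := ((tendsto_log_mul_poisson_div_log hr hc₀ hk).pos_mul_atTop
    (by linarith) tendsto_log_natCast_atTop)
  refine (tendsto_exp_atTop.comp hlog).congr' ?_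
  filter_upwards [tendsto_log_natCast_atTop.eventually_gt_atTop 0, eventually_gt_atTop 0]
    with n hl hn
  have := poissonMeasure_real_singleton_pos (k n) hr
  rw [Function.comp_apply, div_mul_cancel₀ _ hl.ne', exp_log (by positivity)]

end Asymptotics

theorem hasSum_poissonMeasure_real_singleton (r : ℝ≥0) :
    HasSum (fun j => (poissonMeasure r).real {j}) 1 := by
  simpa only [poissonMeasure_real_singleton] using hasSum_one_poissonMeasure r

theorem poissonMeasure_real_singleton_add_le (r : ℝ≥0) (k j : ℕ) :
    (poissonMeasure r).real {k + j} ≤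
      exp r * (poissonMeasure r).real {k} * (poissonMeasure r).real {j} := by
  have hfac : ((k ! * j ! : ℕ) : ℝ) ≤ (k + j)! :=
    Nat.cast_le.mpr <| Nat.le_of_dvd (Nat.factorial_pos _) <|
      Nat.factorial_mul_factorial_dvd_factorial_add k j
  have hrhs : exp r * (poissonMeasure r).real {k} * (poissonMeasure r).real {j} =
      exp (-r) * r ^ (k + j) / ((k ! * j ! : ℕ) : ℝ) := by
    simp only [poissonMeasure_real_singleton, exp_neg, pow_add, Nat.cast_mul]
    field_simp
  rw [hrhs, poissonMeasure_real_singleton]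
  exact div_le_div_of_nonneg_left (by positivity) (by positivity) hfac

section PoissonVariable

variable {Ω : Type*} [MeasurableSpace Ω] {μ : Measure Ω} {r : ℝ≥0} {X : Ω → ℕ}

theorem measureReal_ge_le_of_poisson [IsFiniteMeasure μ]
    (hX : ∀ j, μ.real {ω | X ω = j} = (poissonMeasure r).real {j}) (k : ℕ) :
    μ.real {ω | k ≤ X ω} ≤ exp r * (poissonMeasure r).real {k} := by
  have hsum := (hasSum_poissonMeasure_real_singleton r).mul_left
    (exp r * (poissonMeasure r).real {k})
  rw [mul_one] at hsum
  refine ENNReal.toReal_le_of_le_ofReal (by positivity) ?_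
  calc μ {ω | k ≤ X ω} = μ (⋃ j, {ω | X ω = k + j}) := by
        congr 1
        ext ω
        simpa [eq_comm] using le_iff_exists_add
    _ ≤ ∑' j, μ {ω | X ω = k + j} := measure_iUnion_le _
    _ = ∑' j, ENNReal.ofReal ((poissonMeasure r).real {k + j}) := by
        refine tsum_congr fun j => ?_
        rw [← hX, ofReal_measureReal]
    _ ≤ ∑' j, ENNReal.ofReal
          (exp r * (poissonMeasure r).real {k} * (poissonMeasure r).real {j}) :=
        ENNReal.tsum_le_tsum fun j =>
          ENNReal.ofReal_le_ofReal (poissonMeasure_real_singleton_add_le r k j)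
    _ = ENNReal.ofReal (exp r * (poissonMeasure r).real {k}) := by
        rw [← ENNReal.ofReal_tsum_of_nonneg (fun j => by positivity) hsum.summable, hsum.tsum_eq]

theorem measureReal_le_le_of_poisson
    (hX : ∀ j, μ.real {ω | X ω = j} = (poissonMeasure r).real {j}) (m : ℕ) :
    μ.real {ω | X ω ≤ m} ≤ 1 - (poissonMeasure r).real {m + 1} := by
  have hle := sum_le_hasSum (Finset.range (m + 2)) (fun j _ => measureReal_nonneg)
    (hasSum_poissonMeasure_real_singleton r)
  rw [Finset.sum_range_succ] at hle
  calc μ.real {ω | X ω ≤ m} = μ.real (⋃ j ∈ Finset.range (m + 1), {ω | X ω = j}) := by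
        congr 1
        ext ω
        simp
    _ ≤ ∑ j ∈ Finset.range (m + 1), μ.real {ω | X ω = j} :=
        measureReal_biUnion_finset_le _ _
    _ ≤ 1 - (poissonMeasure r).real {m + 1} := by
        simp_rw [hX]
        linarith

end PoissonVariable

section Maximum

variable {Ω : Type*} [MeasurableSpace Ω] {μ : Measure Ω} {r : ℝ≥0} {X : ℕ → Ω → ℕ}
  {c : ℝ}

theorem measureReal_lt_sup_le [IsFiniteMeasure μ]
    (hX : ∀ i j, μ.real {ω | X i ω = j} = (poissonMeasure r).real {j}) (n k : ℕ) :
    μ.real {ω | k < (Finset.range n).sup (X · ω)} ≤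
      n * (exp r * (poissonMeasure r).real {k + 1}) := by
  calc μ.real {ω | k < (Finset.range n).sup (X · ω)}
      = μ.real (⋃ i ∈ Finset.range n, {ω | k < X i ω}) := by
        congr 1
        ext ω
        simp [Finset.lt_sup_iff]
    _ ≤ ∑ i ∈ Finset.range n, μ.real {ω | k < X i ω} := measureReal_biUnion_finset_le _ _
    _ ≤ n * (exp r * (poissonMeasure r).real {k + 1}) := by
        simpa using Finset.sum_le_card_nsmul (Finset.range n) _ _
          fun i _ => measureReal_ge_le_of_poisson (hX i) (k + 1)

theorem measureReal_sup_le_le [IsProbabilityMeasure μ] (hind : iIndepFun X μ)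
    (hX : ∀ i j, μ.real {ω | X i ω = j} = (poissonMeasure r).real {j}) (n m : ℕ) :
    μ.real {ω | (Finset.range n).sup (X · ω) ≤ m} ≤
      exp (-(n * (poissonMeasure r).real {m + 1})) := by
  set p := (poissonMeasure r).real {m + 1}
  calc μ.real {ω | (Finset.range n).sup (X · ω) ≤ m}
      = μ.real (⋂ i ∈ Finset.range n, X i ⁻¹' Set.Iic m) := by
        congr 1
        ext ω
        simp
    _ = ∏ i ∈ Finset.range n, μ.real (X i ⁻¹' Set.Iic m) := by
        rw [measureReal_def, hind.meas_biInter fun i _ => ⟨Set.Iic m, measurableSet_Iic, rfl⟩,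
          ENNReal.toReal_prod]
        rfl
    _ ≤ ∏ i ∈ Finset.range n, (1 - p) :=
        Finset.prod_le_prod (fun i _ => measureReal_nonneg)
          fun i _ => measureReal_le_le_of_poisson (hX i) m
    _ ≤ ∏ i ∈ Finset.range n, exp (-p) :=
        Finset.prod_le_prod (fun i _ => sub_nonneg.mpr measureReal_le_one)
          fun i _ => one_sub_le_exp_neg p
    _ = exp (-(n * p)) := by
        rw [Finset.prod_const, Finset.card_range, ← exp_nat_mul, mul_neg]

theorem tendsto_measureReal_mul_logDivLogLog_lt_sup [IsFiniteMeasure μ] (hr : 0 < r)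
    (hX : ∀ i j, μ.real {ω | X i ω = j} = (poissonMeasure r).real {j}) (hc : 1 < c) :
    Tendsto (fun n => μ.real {ω | c * logDivLogLog n < ((Finset.range n).sup (X · ω) : ℕ)})
      atTop (𝓝 0) := by
  have hk := tendsto_natFloor_mul_add_one_div (by linarith : 0 ≤ c) tendsto_logDivLogLog_atTop
  have hbound := (tendsto_mul_poisson_nhds_zero hr hc hk).const_mul (exp r)
  rw [mul_zero] at hbound
  refine squeeze_zero' (Eventually.of_forall fun n => measureReal_nonneg) ?_ hbound
  filter_upwards [tendsto_logDivLogLog_atTop.eventually_gt_atTop 0] with n ha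
  calc μ.real {ω | c * logDivLogLog n < ((Finset.range n).sup (X · ω) : ℕ)}
      ≤ μ.real {ω | ⌊c * logDivLogLog n⌋₊ < (Finset.range n).sup (X · ω)} :=
        measureReal_mono fun ω hω => (Nat.floor_lt (by positivity)).mpr hω
    _ ≤ exp r * (n * (poissonMeasure r).real {⌊c * logDivLogLog n⌋₊ + 1}) := by
        simpa [mul_left_comm] using measureReal_lt_sup_le hX n _

theorem tendsto_measureReal_sup_lt_mul_logDivLogLog [IsProbabilityMeasure μ] (hr : 0 < r)
    (hind : iIndepFun X μ) (hX : ∀ i j, μ.real {ω | X i ω = j} = (poissonMeasure r).real {j})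
    (hc₀ : 0 < c) (hc : c < 1) :
    Tendsto
      (fun n => μ.real {ω | (((Finset.range n).sup (X · ω) : ℕ) : ℝ) < c * logDivLogLog n})
      atTop (𝓝 0) := by
  have hk := tendsto_natFloor_mul_add_one_div hc₀.le tendsto_logDivLogLog_atTop
  have hbound := tendsto_exp_atBot.comp (tendsto_neg_atTop_atBot.comp
    (tendsto_mul_poisson_atTop hr hc₀ hc hk))
  refine squeeze_zero' (Eventually.of_forall fun n => measureReal_nonneg) ?_ hbound
  filter_upwards with n
  calc μ.real {ω | (((Finset.range n).sup (X · ω) : ℕ) : ℝ) < c * logDivLogLog n}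
      ≤ μ.real {ω | (Finset.range n).sup (X · ω) ≤ ⌊c * logDivLogLog n⌋₊} :=
        measureReal_mono fun ω hω => Nat.le_floor hω.le
    _ ≤ _ := measureReal_sup_le_le hind hX n _

end Maximum

theorem lt_or_lt_of_lt_abs_div_sub_one {x a ε : ℝ} (ha : 0 < a) (h : ε < |x / a - 1|) :
    (1 + ε) * a < x ∨ x < (1 - ε) * a := by
  rcases lt_abs.mp h with h | h
  · left
    rwa [lt_sub_iff_add_lt', lt_div_iff₀ ha] at h
  · right
    rwa [neg_sub, lt_sub_comm, div_lt_iff₀ ha] at h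

theorem poisson_max_in_probability_general
    {Ω : Type*} [MeasurableSpace Ω] (μ : Measure Ω) [IsProbabilityMeasure μ]
    (X : ℕ → Ω → ℕ) (lam : ℝ) (hlam : 0 < lam)
    (hIndep : iIndepFun X μ)
    (hX : ∀ i, ∀ j : ℕ,
      (μ {ω | X i ω = j}).toReal = Real.exp (-lam) * lam ^ j / (Nat.factorial j))
    (M : ℕ → Ω → ℕ)
    (hM : ∀ n ω, M n ω = (Finset.range n).sup (fun i => X i ω)) :
    ∀ δ : ℝ, 0 < δ →
      Tendsto
        (fun n : ℕ =>
          (μ {ω | δ < |(M n ω : ℝ) * Real.log (Real.log n) / Real.log n - 1|}).toReal)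
        atTop (nhds 0) := by
  intro δ hδ
  obtain rfl : M = fun n ω => (Finset.range n).sup (X · ω) := funext₂ hM
  have hr : 0 < lam.toNNReal := Real.toNNReal_pos.mpr hlam
  have hX' : ∀ i j, μ.real {ω | X i ω = j} = (poissonMeasure lam.toNNReal).real {j} := by
    intro i j
    rw [poissonMeasure_real_singleton, Real.coe_toNNReal _ hlam.le]
    exact hX i j
  set ε := min δ (1 / 2)
  have hε : 0 < ε := lt_min hδ (by norm_num)
  have hε₂ : ε ≤ 1 / 2 := min_le_right _ _
  have hsum := (tendsto_measureReal_mul_logDivLogLog_lt_sup hr hX' (c := 1 + ε) (by linarith)).add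
    (tendsto_measureReal_sup_lt_mul_logDivLogLog hr hIndep hX' (c := 1 - ε) (by linarith)
      (by linarith))
  rw [add_zero] at hsum
  refine squeeze_zero' (Eventually.of_forall fun n => ENNReal.toReal_nonneg) ?_ hsum
  filter_upwards [tendsto_logDivLogLog_atTop.eventually_gt_atTop 0] with n ha
  refine (measureReal_mono fun ω hω => ?_).trans (measureReal_union_le _ _)
  rw [Set.mem_ofPred_eq, ← div_div_eq_mul_div] at hω
  exact lt_or_lt_of_lt_abs_div_sub_one ha ((min_le_left _ _).trans_lt hω)

/-- `M_n / (log n / log log n) → 1` in probability, where `M_n` is the maximum of `n`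
i.i.d. Poisson(λ) random variables. -/
theorem poisson_max_in_probability
    {Ω : Type*} [MeasurableSpace Ω] (μ : Measure Ω) [IsProbabilityMeasure μ]
    (X : ℕ → Ω → ℕ) (lam : ℝ) (hlam : 0 < lam)
    (hIndep : iIndepFun X μ)
    (hX : ∀ i, ∀ j : ℕ,
      (μ {ω | X i ω = j}).toReal = Real.exp (-lam) * lam ^ j / (Nat.factorial j))
    (hMeas : ∀ i, Measurable (X i))
    (M : ℕ → Ω → ℕ)
    (hM : ∀ n ω, M n ω = (Finset.range n).sup (fun i => X i ω)) :
    ∀ δ : ℝ, 0 < δ →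
      Tendsto
        (fun n : ℕ =>
          (μ {ω | δ < |(M n ω : ℝ) * Real.log (Real.log n) / Real.log n - 1|}).toReal)
        atTop (nhds 0) :=
  poisson_max_in_probability_general μ X lam hlam hIndep hX M hM
end
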